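/- Let 𝔤 act on H₃ by triples of 2×2 traceless complex matrices: for (A,B,C) the associated vector is (A⊗I⊗I)w₃ + (I⊗B⊗I)w₃ + (I⊗I⊗C)w₃, where w₃ is the three-qubit W state. Then the ℂ-linear span of {(A⊗I⊗I)w₃ + (I⊗B⊗I)w₃ + (I⊗I⊗C)w₃ : A,B,C ∈ sl(2,ℂ)} has complex dimension 7, and it contains w₃. (Consequently the SLOCC orbit of the W state has real dimension 12 in projective space.) -/
import Mathlib


open scoped BigOperators

/-- The three-qubit Hilbert space. -/
abbrev H3 := (Fin 2 × Fin 2 × Fin 2) → ℂ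

/-- Squared Hermitian norm of a vector in `H3`. -/
noncomputable def normSq3 (v : H3) : ℝ := ∑ x : Fin 2 × Fin 2 × Fin 2, Complex.normSq (v x)

/-- First one-qubit reduced density matrix. -/
noncomputable def rho1 (v : H3) : Matrix (Fin 2) (Fin 2) ℂ :=
  Matrix.of fun a a' => ∑ b : Fin 2, ∑ c : Fin 2, v (a, b, c) * star (v (a', b, c))

/-- Second one-qubit reduced density matrix. -/
noncomputable def rho2 (v : H3) : Matrix (Fin 2) (Fin 2) ℂ :=
  Matrix.of fun b b' => ∑ a : Fin 2, ∑ c : Fin 2, v (a, b, c) * star (v (a, b', c))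

/-- Third one-qubit reduced density matrix. -/
noncomputable def rho3 (v : H3) : Matrix (Fin 2) (Fin 2) ℂ :=
  Matrix.of fun c c' => ∑ a : Fin 2, ∑ b : Fin 2, v (a, b, c) * star (v (a, b, c'))

/-- Minimal (real) eigenvalue of a 2×2 complex matrix. -/
noncomputable def minEig (ρ : Matrix (Fin 2) (Fin 2) ℂ) : ℝ :=
  sInf {t : ℝ | (t : ℂ) ∈ spectrum ℂ ρ}

noncomputable def p1 (v : H3) : ℝ := minEig (rho1 v)
noncomputable def p2 (v : H3) : ℝ := minEig (rho2 v)
noncomputable def p3 (v : H3) : ℝ := minEig (rho3 v)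

/-- The action of a triple of 2×2 matrices on `H3` by the tensor product. -/
noncomputable def tensor3 (A1 A2 A3 : Matrix (Fin 2) (Fin 2) ℂ) (v : H3) : H3 :=
  fun x => ∑ a' : Fin 2, ∑ b' : Fin 2, ∑ c' : Fin 2,
    A1 x.1 a' * A2 x.2.1 b' * A3 x.2.2 c' * v (a', b', c')

/-- Local unitary equivalence of three-qubit states. -/
def LUequiv (v w : H3) : Prop :=
  ∃ U1 U2 U3 : Matrix (Fin 2) (Fin 2) ℂ,
    U1 ∈ Matrix.unitaryGroup (Fin 2) ℂ ∧ U2 ∈ Matrix.unitaryGroup (Fin 2) ℂ ∧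
    U3 ∈ Matrix.unitaryGroup (Fin 2) ℂ ∧ w = tensor3 U1 U2 U3 v

/-- The three-qubit W state. -/
noncomputable def wState : H3 := fun x =>
  if (x.1 = 1 ∧ x.2.1 = 0 ∧ x.2.2 = 0) ∨ (x.1 = 0 ∧ x.2.1 = 1 ∧ x.2.2 = 0) ∨
      (x.1 = 0 ∧ x.2.1 = 0 ∧ x.2.2 = 1)
  then ((1 / Real.sqrt 3 : ℝ) : ℂ) else 0

/-- The SLOCC class of the W state. -/
def WClass : Set H3 :=
  {v | ∃ (A1 A2 A3 : Matrix (Fin 2) (Fin 2) ℂ) (l : ℂ),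
    A1.det = 1 ∧ A2.det = 1 ∧ A3.det = 1 ∧ l ≠ 0 ∧ v = l • tensor3 A1 A2 A3 wState}

/-- The tangent vectors at the W state generated by the Lie algebra
`sl(2,ℂ) ⊕ sl(2,ℂ) ⊕ sl(2,ℂ)` acting on `H3`. -/
def sl2TangentW : Set H3 :=
  {u | ∃ A B C : Matrix (Fin 2) (Fin 2) ℂ, A.trace = 0 ∧ B.trace = 0 ∧ C.trace = 0 ∧
    u = tensor3 A 1 1 wState + tensor3 1 B 1 wState + tensor3 1 1 C wState}

noncomputable def myCC : ℂ := ((1/Real.sqrt 3 : ℝ) : ℂ)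

lemma myCC_ne : myCC ≠ 0 := by
  simp only [myCC, ne_eq, Complex.ofReal_eq_zero, one_div, inv_eq_zero]
  positivity

lemma myCC2_ne : (2*myCC) ≠ 0 := mul_ne_zero two_ne_zero myCC_ne

def myBV (x0 : Fin 2 × Fin 2 × Fin 2) : H3 := fun y => if y = x0 then 1 else 0

lemma idE000 : tensor3 !![0,1;0,0] 1 1 wState + tensor3 1 0 1 wState
    + tensor3 1 1 0 wState = myCC • myBV (0,0,0) := by
  funext x; obtain ⟨a,b,c⟩ := x
  fin_cases a <;> fin_cases b <;> fin_cases c <;>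
    (simp [tensor3, wState, myBV, myCC, Fin.sum_univ_two, Matrix.one_apply, Prod.ext_iff]; try ring)

lemma idF110 : tensor3 !![0,0;1,0] 1 1 wState + tensor3 1 !![0,0;1,0] 1 wState
    + tensor3 1 1 (-!![0,0;1,0]) wState = (2*myCC) • myBV (1,1,0) := by
  funext x; obtain ⟨a,b,c⟩ := x
  fin_cases a <;> fin_cases b <;> fin_cases c <;>
    (simp [tensor3, wState, myBV, myCC, Fin.sum_univ_two, Matrix.one_apply, Prod.ext_iff]; try ring)

lemma idF101 : tensor3 !![0,0;1,0] 1 1 wState + tensor3 1 (-!![0,0;1,0]) 1 wState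
    + tensor3 1 1 !![0,0;1,0] wState = (2*myCC) • myBV (1,0,1) := by
  funext x; obtain ⟨a,b,c⟩ := x
  fin_cases a <;> fin_cases b <;> fin_cases c <;>
    (simp [tensor3, wState, myBV, myCC, Fin.sum_univ_two, Matrix.one_apply, Prod.ext_iff]; try ring)

lemma idF011 : tensor3 (-!![0,0;1,0]) 1 1 wState + tensor3 1 !![0,0;1,0] 1 wState
    + tensor3 1 1 !![0,0;1,0] wState = (2*myCC) • myBV (0,1,1) := by
  funext x; obtain ⟨a,b,c⟩ := x
  fin_cases a <;> fin_cases b <;> fin_cases c <;>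
    (simp [tensor3, wState, myBV, myCC, Fin.sum_univ_two, Matrix.one_apply, Prod.ext_iff]; try ring)

lemma idH100 : tensor3 0 1 1 wState + tensor3 1 !![1,0;0,-1] 1 wState
    + tensor3 1 1 !![1,0;0,-1] wState = (2*myCC) • myBV (1,0,0) := by
  funext x; obtain ⟨a,b,c⟩ := x
  fin_cases a <;> fin_cases b <;> fin_cases c <;>
    (simp [tensor3, wState, myBV, myCC, Fin.sum_univ_two, Matrix.one_apply, Prod.ext_iff]; try ring)

lemma idH010 : tensor3 !![1,0;0,-1] 1 1 wState + tensor3 1 0 1 wState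
    + tensor3 1 1 !![1,0;0,-1] wState = (2*myCC) • myBV (0,1,0) := by
  funext x; obtain ⟨a,b,c⟩ := x
  fin_cases a <;> fin_cases b <;> fin_cases c <;>
    (simp [tensor3, wState, myBV, myCC, Fin.sum_univ_two, Matrix.one_apply, Prod.ext_iff]; try ring)

lemma idH001 : tensor3 !![1,0;0,-1] 1 1 wState + tensor3 1 !![1,0;0,-1] 1 wState
    + tensor3 1 1 0 wState = (2*myCC) • myBV (0,0,1) := by
  funext x; obtain ⟨a,b,c⟩ := x
  fin_cases a <;> fin_cases b <;> fin_cases c <;>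
    (simp [tensor3, wState, myBV, myCC, Fin.sum_univ_two, Matrix.one_apply, Prod.ext_iff]; try ring)

lemma idHHH : tensor3 !![1,0;0,-1] 1 1 wState + tensor3 1 !![1,0;0,-1] 1 wState
    + tensor3 1 1 !![1,0;0,-1] wState = wState := by
  funext x; obtain ⟨a,b,c⟩ := x
  fin_cases a <;> fin_cases b <;> fin_cases c <;>
    (simp [tensor3, wState, myBV, myCC, Fin.sum_univ_two, Matrix.one_apply, Prod.ext_iff]; try ring)

lemma trE : (!![0,1;0,0] : Matrix (Fin 2) (Fin 2) ℂ).trace = 0 := by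
  simp [Matrix.trace_fin_two_of]
lemma trF : (!![0,0;1,0] : Matrix (Fin 2) (Fin 2) ℂ).trace = 0 := by
  simp [Matrix.trace_fin_two_of]
lemma trH : (!![1,0;0,-1] : Matrix (Fin 2) (Fin 2) ℂ).trace = 0 := by
  simp [Matrix.trace_fin_two_of]
lemma trnF : (-!![0,0;1,0] : Matrix (Fin 2) (Fin 2) ℂ).trace = 0 := by
  rw [Matrix.trace_neg, trF, neg_zero]

lemma mem_span_tangent (A B C : Matrix (Fin 2) (Fin 2) ℂ)
    (hA : A.trace = 0) (hB : B.trace = 0) (hC : C.trace = 0) :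
    tensor3 A 1 1 wState + tensor3 1 B 1 wState + tensor3 1 1 C wState
      ∈ Submodule.span ℂ sl2TangentW :=
  Submodule.subset_span ⟨A, B, C, hA, hB, hC, rfl⟩

lemma tangent_at_111 (A B C : Matrix (Fin 2) (Fin 2) ℂ) :
    (tensor3 A 1 1 wState + tensor3 1 B 1 wState + tensor3 1 1 C wState) (1,1,1) = 0 := by
  simp [tensor3, wState, Fin.sum_univ_two, Matrix.one_apply, Prod.ext_iff]

lemma wState_mem : wState ∈ Submodule.span ℂ sl2TangentW := by
  rw [← idHHH]; exact mem_span_tangent _ _ _ trH trH trH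

lemma bv_mem : ∀ x0 : Fin 2 × Fin 2 × Fin 2, x0 ≠ (1,1,1) →
    myBV x0 ∈ Submodule.span ℂ sl2TangentW := by
  have h000 := mem_span_tangent _ _ _ trE (Matrix.trace_zero _ _) (Matrix.trace_zero _ _)
  rw [idE000] at h000
  have h000' := (Submodule.smul_mem_iff _ myCC_ne).mp h000
  have h110 := mem_span_tangent _ _ _ trF trF trnF
  rw [idF110] at h110
  have h110' := (Submodule.smul_mem_iff _ myCC2_ne).mp h110
  have h101 := mem_span_tangent _ _ _ trF trnF trF
  rw [idF101] at h101
  have h101' := (Submodule.smul_mem_iff _ myCC2_ne).mp h101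
  have h011 := mem_span_tangent _ _ _ trnF trF trF
  rw [idF011] at h011
  have h011' := (Submodule.smul_mem_iff _ myCC2_ne).mp h011
  have h100 := mem_span_tangent _ _ _ (Matrix.trace_zero _ _) trH trH
  rw [idH100] at h100
  have h100' := (Submodule.smul_mem_iff _ myCC2_ne).mp h100
  have h010 := mem_span_tangent _ _ _ trH (Matrix.trace_zero _ _) trH
  rw [idH010] at h010
  have h010' := (Submodule.smul_mem_iff _ myCC2_ne).mp h010
  have h001 := mem_span_tangent _ _ _ trH trH (Matrix.trace_zero _ _)
  rw [idH001] at h001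
  have h001' := (Submodule.smul_mem_iff _ myCC2_ne).mp h001
  rintro ⟨a,b,c⟩ hx
  fin_cases a <;> fin_cases b <;> fin_cases c <;>
    first
      | exact h000' | exact h001' | exact h010' | exact h011'
      | exact h100' | exact h101' | exact h110' | exact absurd rfl hx

lemma span_eq_ker : Submodule.span ℂ sl2TangentW =
    LinearMap.ker (LinearMap.proj (R := ℂ) ((1,1,1) : Fin 2 × Fin 2 × Fin 2)
      : H3 →ₗ[ℂ] ℂ) := by
  apply le_antisymm
  · rw [Submodule.span_le]
    rintro u ⟨A, B, C, -, -, -, rfl⟩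
    exact tangent_at_111 A B C
  · intro v hv
    have hv111 : v (1,1,1) = 0 := hv
    have hv1 : v 1 = 0 := hv111
    have hdecomp : v = v (0,0,0) • myBV (0,0,0) + v (0,0,1) • myBV (0,0,1)
        + v (0,1,0) • myBV (0,1,0) + v (0,1,1) • myBV (0,1,1)
        + v (1,0,0) • myBV (1,0,0) + v (1,0,1) • myBV (1,0,1)
        + v (1,1,0) • myBV (1,1,0) := by
      funext x; obtain ⟨a,b,c⟩ := x
      fin_cases a <;> fin_cases b <;> fin_cases c <;>
        simp [myBV, Prod.ext_iff, hv111, hv1]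
    rw [hdecomp]
    have hm : ∀ x0 : Fin 2 × Fin 2 × Fin 2, x0 ≠ (1,1,1) →
        myBV x0 ∈ Submodule.span ℂ sl2TangentW := bv_mem
    refine Submodule.add_mem _ (Submodule.add_mem _ (Submodule.add_mem _
      (Submodule.add_mem _ (Submodule.add_mem _ (Submodule.add_mem _
        (Submodule.smul_mem _ _ (hm _ (by decide)))
        (Submodule.smul_mem _ _ (hm _ (by decide))))
        (Submodule.smul_mem _ _ (hm _ (by decide))))
        (Submodule.smul_mem _ _ (hm _ (by decide))))
        (Submodule.smul_mem _ _ (hm _ (by decide))))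
        (Submodule.smul_mem _ _ (hm _ (by decide))))
        (Submodule.smul_mem _ _ (hm _ (by decide)))

/-- the span of the `sl(2,ℂ)^{⊕3}`-tangent vectors at the W state has
complex dimension `7` and contains the W state. -/
theorem sl2_tangent_space_at_W_state :
    Module.finrank ℂ ↥(Submodule.span ℂ sl2TangentW) = 7 ∧
    wState ∈ Submodule.span ℂ sl2TangentW := by
  refine ⟨?_, wState_mem⟩
  rw [span_eq_ker]
  set f : H3 →ₗ[ℂ] ℂ :=
    (LinearMap.proj (R := ℂ) ((1,1,1) : Fin 2 × Fin 2 × Fin 2)) with hf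
  have hsurj : Function.Surjective f := fun c => ⟨fun _ => c, rfl⟩
  have hrange : LinearMap.range f = ⊤ := LinearMap.range_eq_top.mpr hsurj
  have hrank := LinearMap.finrank_range_add_finrank_ker f
  rw [hrange] at hrank
  have h1 : Module.finrank ℂ (⊤ : Submodule ℂ ℂ) = 1 := by
    rw [finrank_top]; exact Module.finrank_self ℂ
  have h8 : Module.finrank ℂ H3 = 8 := by
    rw [Module.finrank_fintype_fun_eq_card]
    simp
  rw [h1, h8] at hrank
  omega
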